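/- In a grid graph with all horizontal and vertical edges of cost 1 and diagonal edges of cost 0 or 1, if there is a path from (i,j) to (i',j') of cost ℓ (with i ≤ i', j ≤ j'), and a ≤ min(i'−i, j'−j), then there is a path from (i, j+a) to (i'−a, j') of cost at most ℓ + 2a, and similarly from (i+a, j) to (i', j'−a). -/

import Mathlib

variable {α : Type*}

/-- Costs for the Levenshtein edit distance (removed from Mathlib; restored with its old meaning). -/
structure Levenshtein.Cost (α β δ : Type*) where
  delete : α → δ
  insert : β → δ
  substitute : α → β → δ

/-- The default unit costs (restored from old Mathlib). -/
def Levenshtein.defaultCost [DecidableEq α] : Levenshtein.Cost α α ℕ where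
  delete _ := 1
  insert _ := 1
  substitute a b := if a = b then 0 else 1

/-- Auxiliary step of the Levenshtein algorithm (restored from old Mathlib). -/
def Levenshtein.impl {β δ : Type*} [Zero δ] [Min δ] [Add δ] (C : Levenshtein.Cost α β δ)
    (xs : List α) (y : β) (d : {r : List δ // 0 < r.length}) : {r : List δ // 0 < r.length} :=
  let ⟨ds, w⟩ := d
  xs.zip (ds.zip ds.tail) |>.foldr
    (init := ⟨[ds.getLast (List.length_pos_iff_ne_nil.mp w) + C.insert y], by simp⟩)
    (fun ⟨x, d₀, d₁⟩ ⟨r, w⟩ =>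
      ⟨min (C.delete x + r[0]) (min (C.insert y + d₀) (C.substitute x y + d₁)) :: r, by simp⟩)

/-- Levenshtein distances of all suffixes (restored from old Mathlib). -/
def suffixLevenshtein {β δ : Type*} [Zero δ] [Min δ] [Add δ] (C : Levenshtein.Cost α β δ)
    (xs : List α) (ys : List β) : {r : List δ // 0 < r.length} :=
  ys.foldr
    (Levenshtein.impl C xs)
    (xs.foldr (init := ⟨[0], by simp⟩) (fun a ⟨ds, w⟩ => ⟨(C.delete a + ds[0]) :: ds, by simp⟩))

/-- Levenshtein edit distance (restored from old Mathlib). -/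
def levenshtein {β δ : Type*} [Zero δ] [Min δ] [Add δ] (C : Levenshtein.Cost α β δ)
    (xs : List α) (ys : List β) : δ :=
  let ⟨r, w⟩ := suffixLevenshtein C xs ys
  r[0]

/-- Levenshtein edit distance with unit costs. -/
def edit [DecidableEq α] (u v : List α) : ℕ :=
  levenshtein Levenshtein.defaultCost u v

/-- `GridPath hcost dcost p q c` : there is a path from `p` to `q` in the grid
graph of total cost `c`, where the horizontal edge (i,j) → (i+1,j) costs
`hcost (i,j)`, each vertical edge (i,j) → (i,j+1) costs 1, and the diagonal
edge (i,j) → (i+1,j+1) costs `dcost (i,j)`. -/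
inductive GridPath (hcost dcost : ℕ × ℕ → ℕ) : ℕ × ℕ → ℕ × ℕ → ℕ → Prop
  | nil (p : ℕ × ℕ) : GridPath hcost dcost p p 0
  | horiz {q : ℕ × ℕ} {c : ℕ} (i j : ℕ) :
      GridPath hcost dcost (i + 1, j) q c → GridPath hcost dcost (i, j) q (hcost (i, j) + c)
  | vert {q : ℕ × ℕ} {c : ℕ} (i j : ℕ) :
      GridPath hcost dcost (i, j + 1) q c → GridPath hcost dcost (i, j) q (1 + c)
  | diag {q : ℕ × ℕ} {c : ℕ} (i j : ℕ) :
      GridPath hcost dcost (i + 1, j + 1) q c → GridPath hcost dcost (i, j) q (dcost (i, j) + c)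


/-!
Moving the start of a path one row up costs at most 1: re-route the first edge one row higher,
replacing a diagonal edge by a horizontal one of cost 1. Moving the end one column to the left
costs at most 1 as well: follow the path until its step into the last column and go straight
up from there instead, which is affordable because a path rising by more than its horizontal
run pays for the excess with vertical edges. Iterating gives the first statement; the second is
the first one for the transposed grid.
-/

namespace GridPath

variable {h d : ℕ × ℕ → ℕ} {p q : ℕ × ℕ} {c ℓ : ℕ}

theorem le (hp : GridPath h d p q c) : p ≤ q := by
  induction hp with
  | nil => exact le_rfl
  | horiz _ _ _ ih | vert _ _ _ ih | diag _ _ _ ih =>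
    rw [Prod.le_def] at ih ⊢
    dsimp only at ih ⊢
    omega

theorem snd_add_le_cost_add (hp : GridPath h d p q c) : q.2 + p.1 ≤ c + q.1 + p.2 := by
  induction hp with
  | nil => omega
  | horiz _ _ _ ih | vert _ _ _ ih | diag _ _ _ ih => dsimp only at ih ⊢; omega

theorem column (i j n : ℕ) : GridPath h d (i, j) (i, j + n) n := by
  induction n generalizing j with
  | zero => exact nil _
  | succ n ih =>
    rw [show j + (n + 1) = j + 1 + n by omega, Nat.add_comm n 1]
    exact vert i j (ih (j + 1))

theorem column_of_le (i : ℕ) {j k : ℕ} (hjk : j ≤ k) : GridPath h d (i, j) (i, k) (k - j) := by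
  simpa only [Nat.add_sub_cancel' hjk] using column (h := h) (d := d) i j (k - j)

theorem exists_shift_end_left_one (hp : GridPath h d p q ℓ) (hpq : p.1 < q.1) :
    ∃ c ≤ ℓ + 1, GridPath h d p (q.1 - 1, q.2) c := by
  induction hp with
  | nil => omega
  | @horiz q c i j hq ih =>
    dsimp only at hpq ih ⊢
    by_cases hlast : i + 1 < q.1
    · obtain ⟨c', hc', hq'⟩ := ih hlast
      exact ⟨h (i, j) + c', by omega, horiz i j hq'⟩
    · have hrise := hq.snd_add_le_cost_add
      have hj : j ≤ q.2 := (Prod.le_def.mp hq.le).2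
      rw [show q.1 - 1 = i by omega]
      exact ⟨q.2 - j, by dsimp only at hrise; omega, column_of_le i hj⟩
  | @vert q c i j _ ih =>
    obtain ⟨c', hc', hq'⟩ := ih hpq
    exact ⟨1 + c', by omega, vert i j hq'⟩
  | @diag q c i j hq ih =>
    dsimp only at hpq ih ⊢
    by_cases hlast : i + 1 < q.1
    · obtain ⟨c', hc', hq'⟩ := ih hlast
      exact ⟨d (i, j) + c', by omega, diag i j hq'⟩
    · have hrise := hq.snd_add_le_cost_add
      have hj : j + 1 ≤ q.2 := (Prod.le_def.mp hq.le).2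
      rw [show q.1 - 1 = i by omega]
      exact ⟨q.2 - j, by dsimp only at hrise; omega, column_of_le i (by omega)⟩

theorem exists_shift_end_left (hp : GridPath h d p q ℓ) (b : ℕ) (hb : p.1 + b ≤ q.1) :
    ∃ c ≤ ℓ + b, GridPath h d p (q.1 - b, q.2) c := by
  induction b with
  | zero => exact ⟨ℓ, le_rfl, hp⟩
  | succ b ih =>
    obtain ⟨c, hc, hp'⟩ := ih (by omega)
    obtain ⟨c', hc', hp''⟩ := hp'.exists_shift_end_left_one (by dsimp only; omega)
    exact ⟨c', by omega, by rwa [Nat.sub_sub] at hp''⟩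

theorem exists_shift_start_up_one (hp : GridPath (fun _ => 1) d p q ℓ) (hpq : p.2 < q.2) :
    ∃ c ≤ ℓ + 1, GridPath (fun _ => 1) d (p.1, p.2 + 1) q c := by
  induction hp with
  | nil => omega
  | @horiz q c i j _ ih =>
    obtain ⟨c', hc', hq'⟩ := ih hpq
    exact ⟨1 + c', by omega, horiz i (j + 1) hq'⟩
  | @vert q c i j hq _ => exact ⟨c, by omega, hq⟩
  | @diag q c i j hq _ => exact ⟨1 + c, by omega, horiz i (j + 1) hq⟩

theorem exists_shift_start_up (hp : GridPath (fun _ => 1) d p q ℓ) (a : ℕ) (ha : p.2 + a ≤ q.2) :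
    ∃ c ≤ ℓ + a, GridPath (fun _ => 1) d (p.1, p.2 + a) q c := by
  induction a with
  | zero => exact ⟨ℓ, le_rfl, hp⟩
  | succ a ih =>
    obtain ⟨c, hc, hp'⟩ := ih (by omega)
    obtain ⟨c', hc', hp''⟩ := hp'.exists_shift_start_up_one (by dsimp only; omega)
    exact ⟨c', by omega, hp''⟩

theorem exists_shift (hp : GridPath (fun _ => 1) d p q ℓ) (a b : ℕ) (ha : p.2 + a ≤ q.2)
    (hb : p.1 + b ≤ q.1) :
    ∃ c ≤ ℓ + a + b, GridPath (fun _ => 1) d (p.1, p.2 + a) (q.1 - b, q.2) c := by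
  obtain ⟨c, hc, hp'⟩ := hp.exists_shift_start_up a ha
  obtain ⟨c', hc', hp''⟩ := hp'.exists_shift_end_left b hb
  exact ⟨c', by omega, hp''⟩

theorem swap (hp : GridPath (fun _ => 1) d p q c) :
    GridPath (fun _ => 1) (d ∘ Prod.swap) p.swap q.swap c := by
  induction hp with
  | nil => exact nil _
  | horiz i j _ ih => exact vert j i ih
  | vert i j _ ih => exact horiz j i ih
  | diag i j _ ih => exact diag j i ih

end GridPath

theorem stmt_18_general (dcost : ℕ × ℕ → ℕ)
    (i j i' j' ℓ a : ℕ) (hi : i ≤ i') (hj : j ≤ j')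
    (ha : a ≤ min (i' - i) (j' - j))
    (h : GridPath (fun _ => 1) dcost (i, j) (i', j') ℓ) :
    (∃ c ≤ ℓ + 2 * a, GridPath (fun _ => 1) dcost (i, j + a) (i' - a, j') c) ∧
      (∃ c ≤ ℓ + 2 * a, GridPath (fun _ => 1) dcost (i + a, j) (i', j' - a) c) := by
  have hai : i + a ≤ i' := by omega
  have haj : j + a ≤ j' := by omega
  constructor
  · obtain ⟨c, hc, hp⟩ := h.exists_shift a a haj hai
    exact ⟨c, by omega, hp⟩
  · obtain ⟨c, hc, hp⟩ := h.swap.exists_shift a a hai haj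
    exact ⟨c, by omega, hp.swap⟩

/-- Shifting the endpoints of a path within a grid graph costs at most 2a
extra: from a path (i,j) → (i',j') of cost ℓ one gets paths
(i, j+a) → (i'-a, j') and (i+a, j) → (i', j'-a) of cost at most ℓ + 2a. -/
theorem stmt_18 (dcost : ℕ × ℕ → ℕ) (hd : ∀ p, dcost p ≤ 1)
    (i j i' j' ℓ a : ℕ) (hi : i ≤ i') (hj : j ≤ j')
    (ha : a ≤ min (i' - i) (j' - j))
    (h : GridPath (fun _ => 1) dcost (i, j) (i', j') ℓ) :
    (∃ c ≤ ℓ + 2 * a, GridPath (fun _ => 1) dcost (i, j + a) (i' - a, j') c) ∧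
      (∃ c ≤ ℓ + 2 * a, GridPath (fun _ => 1) dcost (i + a, j) (i', j' - a) c) :=
  stmt_18_general dcost i j i' j' ℓ a hi hj ha h
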